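/- Let ρ and σ be d×d density matrices with ‖ρ − σ‖₁ ≤ κ for some κ with 0 < κ ≤ 1/e. Let G be a CPTNI map from d×d to d'×d' complex matrices and Z a pinching channel on d'×d' complex matrices, and let f(ρ) = H(Z(G(ρ))) − H(G(ρ)). Then |f(ρ) − f(σ)| ≤ 2κ·log(d'/κ). -/

import Mathlib

open scoped BigOperators ComplexOrder Matrix

/-- The trace norm `‖A‖₁ = Tr √(AᴴA)` of a square complex matrix. -/
noncomputable def traceNorm {d : ℕ} (A : Matrix (Fin d) (Fin d) ℂ) : ℝ :=
  ((Matrix.posSemidef_conjTranspose_mul_self A).1.eigenvectorUnitary.1 *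
    Matrix.diagonal (((↑) : ℝ → ℂ) ∘ Real.sqrt ∘ (Matrix.posSemidef_conjTranspose_mul_self A).1.eigenvalues) *
    (star (Matrix.posSemidef_conjTranspose_mul_self A).1.eigenvectorUnitary :
      Matrix (Fin d) (Fin d) ℂ)).trace.re

/-- The von Neumann entropy `H(σ) = −Σ λ_i log λ_i` of a Hermitian matrix
(`0` for non-Hermitian matrices; `log` is the natural logarithm, `0 log 0 = 0`). -/
noncomputable def vnEntropy {d : ℕ} (A : Matrix (Fin d) (Fin d) ℂ) : ℝ :=
  if hA : A.IsHermitian then -∑ i, hA.eigenvalues i * Real.log (hA.eigenvalues i) else 0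

/-!
Write `f(ρ) - f(σ)` as the entropy difference of the pair `Z (G ρ)`, `Z (G σ)` minus that of the
pair `G ρ`, `G σ`. The pinching `Z` is itself a CPTNI map with Kraus operators `P j`, and CPTNI maps
do not increase traces and contract the trace norm on Hermitian matrices (split `Δ = P - Q` into
positive parts with `‖Δ‖₁ = tr P + tr Q`). So both pairs are subnormalized states at trace distance
at most `κ`, and Fannes' inequality bounds each entropy difference by `κ log (d' / κ)`. Fannes'
inequality itself follows from Weyl's monotonicity principle, which puts the decreasingly sorted
eigenvalues of the two states at `ℓ¹`-distance at most `κ`, from the estimate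
`|η x - η y| ≤ η |x - y|` for `η x = -x log x`, and from concavity of `η`.
-/

open Matrix RCLike Module
open scoped MatrixOrder

namespace Real

lemma negMulLog_add_le {x t : ℝ} (hx : 0 ≤ x) (ht : 0 ≤ t) :
    negMulLog (x + t) ≤ negMulLog x + negMulLog t := by
  rcases hx.eq_or_lt with rfl | hx0
  · simp
  rcases ht.eq_or_lt with rfl | ht0
  · simp
  have hlx : x * log x ≤ x * log (x + t) := by gcongr; linarith
  have hlt : t * log t ≤ t * log (x + t) := by gcongr; linarith
  simp only [negMulLog]
  linarith

lemma negMulLog_sub_negMulLog_add_le {x t : ℝ} (hx : 0 ≤ x) (ht : 0 ≤ t) (hxt : x + t ≤ 1)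
    (hte : t ≤ exp (-1)) : negMulLog x - negMulLog (x + t) ≤ negMulLog t := by
  rcases ht.eq_or_lt with rfl | ht0
  · simp
  have hlogt : log t ≤ -1 := by simpa using log_le_log ht0 hte
  have hlogxt : log (x + t) ≤ 0 := log_nonpos (by linarith) hxt
  -- `x log ((x + t) / x) ≤ t` since `log y ≤ y - 1`
  have hgain : x * (log (x + t) - log x) ≤ t := by
    rcases hx.eq_or_lt with rfl | hx0
    · simp [ht0.le]
    have := log_le_sub_one_of_pos (show 0 < (x + t) / x by positivity)
    rw [log_div (by linarith) hx0.ne'] at this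
    calc x * (log (x + t) - log x) ≤ x * ((x + t) / x - 1) := by gcongr
      _ = t := by field_simp; ring
  simp only [negMulLog]
  nlinarith

lemma abs_negMulLog_sub_le {x y : ℝ} (hx : x ∈ Set.Icc (0 : ℝ) 1) (hy : y ∈ Set.Icc (0 : ℝ) 1)
    (hxy : |x - y| ≤ exp (-1)) : |negMulLog x - negMulLog y| ≤ negMulLog |x - y| := by
  wlog hle : x ≤ y generalizing x y
  · rw [abs_sub_comm, abs_sub_comm x]
    exact this hy hx (by rwa [abs_sub_comm]) (by linarith)
  obtain ⟨t, ht, rfl⟩ : ∃ t, 0 ≤ t ∧ y = x + t := ⟨y - x, by linarith, by ring⟩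
  rw [show x - (x + t) = -t by ring, abs_neg, abs_of_nonneg ht] at hxy ⊢
  rw [abs_le]
  constructor
  · linarith [negMulLog_add_le hx.1 ht]
  · exact negMulLog_sub_negMulLog_add_le hx.1 ht hy.2 hxy

lemma negMulLog_monotoneOn : MonotoneOn negMulLog (Set.Icc 0 (exp (-1))) := by
  refine monotoneOn_of_deriv_nonneg (convex_Icc _ _) continuous_negMulLog.continuousOn
    (differentiableOn_negMulLog.mono ?_) fun x hx ↦ ?_
  · rw [interior_Icc]
    exact fun x hx ↦ hx.1.ne'
  · rw [interior_Icc] at hx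
    rw [deriv_negMulLog hx.1.ne']
    linarith [(log_lt_log_iff hx.1 (exp_pos _)).mpr hx.2, log_exp (-1)]

lemma sum_negMulLog_le {ι : Type*} [Fintype ι] {ε : ι → ℝ} (hε : ∀ i, 0 ≤ ε i) {κ : ℝ}
    (hκ : 0 < κ) (hκe : κ ≤ exp (-1)) (hsum : ∑ i, ε i ≤ κ) :
    ∑ i, negMulLog (ε i) ≤ κ * log (Fintype.card ι / κ) := by
  cases isEmpty_or_nonempty ι
  · simp
  set n : ℝ := (Fintype.card ι : ℝ)
  have hn : 0 < n := by simp [n, Fintype.card_pos]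
  set s := ∑ i, ε i
  have hs : 0 ≤ s := Finset.sum_nonneg fun i _ ↦ hε i
  have hlogn : 0 ≤ log n := log_nonneg (Nat.one_le_cast.mpr Fintype.card_pos)
  have hjensen : ∑ i, n⁻¹ • negMulLog (ε i) ≤ negMulLog (∑ i, n⁻¹ • ε i) :=
    concaveOn_negMulLog.le_map_sum (fun _ _ ↦ by positivity)
      (by simp [n, Finset.card_univ, hn.ne']) fun i _ ↦ hε i
  simp only [smul_eq_mul, ← Finset.mul_sum] at hjensen
  have hηs : n * negMulLog (n⁻¹ * s) = s * log n + negMulLog s := by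
    rw [negMulLog_mul, negMulLog, log_inv]
    field_simp
  calc ∑ i, negMulLog (ε i) ≤ s * log n + negMulLog s := by
        rw [← hηs, ← inv_mul_le_iff₀ hn]
        exact hjensen
    _ ≤ κ * log n + negMulLog κ := by
        gcongr
        exact negMulLog_monotoneOn ⟨hs, hsum.trans hκe⟩ ⟨hκ.le, hκe⟩ hsum
    _ = κ * log (n / κ) := by rw [log_div hn.ne' hκ.ne', negMulLog]; ring

lemma abs_sum_negMulLog_sub_le {ι : Type*} [Fintype ι] {x y : ι → ℝ}
    (hx : ∀ i, x i ∈ Set.Icc 0 1) (hy : ∀ i, y i ∈ Set.Icc 0 1) {κ : ℝ} (hκ : 0 < κ)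
    (hκe : κ ≤ exp (-1)) (hxy : ∑ i, |x i - y i| ≤ κ) :
    |∑ i, negMulLog (x i) - ∑ i, negMulLog (y i)| ≤ κ * log (Fintype.card ι / κ) := by
  have hxy_le (i) : |x i - y i| ≤ exp (-1) :=
    ((Finset.single_le_sum (fun j _ ↦ abs_nonneg (x j - y j)) (Finset.mem_univ i)).trans
      hxy).trans hκe
  rw [← Finset.sum_sub_distrib]
  calc |∑ i, (negMulLog (x i) - negMulLog (y i))|
      ≤ ∑ i, |negMulLog (x i) - negMulLog (y i)| := Finset.abs_sum_le_sum_abs _ _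
    _ ≤ ∑ i, negMulLog |x i - y i| :=
        Finset.sum_le_sum fun i _ ↦ abs_negMulLog_sub_le (hx i) (hy i) (hxy_le i)
    _ ≤ κ * log (Fintype.card ι / κ) :=
        sum_negMulLog_le (fun i ↦ abs_nonneg _) hκ hκe hxy

end Real

lemma Submodule.inf_ne_bot_of_finrank_lt_add {K V : Type*} [DivisionRing K] [AddCommGroup V]
    [Module K V] [FiniteDimensional K V] {U W : Submodule K V}
    (h : finrank K V < finrank K U + finrank K W) : U ⊓ W ≠ ⊥ := by
  rw [Ne, ← Submodule.finrank_eq_zero]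
  have := Submodule.finrank_sup_add_finrank_inf_eq U W
  have := Submodule.finrank_le (U ⊔ W)
  omega

section InnerProductSpace

variable {𝕜 E : Type*} [RCLike 𝕜] [NormedAddCommGroup E] [InnerProductSpace 𝕜 E]

namespace OrthonormalBasis

variable {ι : Type*} [Fintype ι] (b : OrthonormalBasis ι 𝕜 E) (s : Finset ι)

lemma repr_apply_eq_zero_of_mem_span {x : E}
    (hx : x ∈ Submodule.span 𝕜 (Set.range fun k : s ↦ b k)) {j : ι} (hj : j ∉ s) :
    b.repr x j = 0 := by
  have : Submodule.span 𝕜 (Set.range fun k : s ↦ b k) ≤ LinearMap.ker (innerₛₗ 𝕜 (b j)) := by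
    rw [Submodule.span_le]
    rintro _ ⟨⟨k, hk⟩, rfl⟩
    exact b.orthonormal.inner_eq_zero (ne_of_mem_of_not_mem hk hj).symm
  simpa [b.repr_apply_apply] using this hx

lemma finrank_span_range_subtype :
    finrank 𝕜 (Submodule.span 𝕜 (Set.range fun k : s ↦ b k)) = s.card :=
  (finrank_span_eq_card (b.orthonormal.linearIndependent.comp _ Subtype.val_injective)).trans
    (Fintype.card_coe s)

end OrthonormalBasis

namespace LinearMap.IsSymmetric

variable [FiniteDimensional 𝕜 E] {T S : E →ₗ[𝕜] E} {n : ℕ}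

lemma re_inner_apply_self_eq_sum (hT : T.IsSymmetric) (hn : finrank 𝕜 E = n) (x : E) :
    re (inner 𝕜 (T x) x) =
      ∑ i, hT.eigenvalues hn i * ‖(hT.eigenvectorBasis hn).repr x i‖ ^ 2 := by
  rw [← (hT.eigenvectorBasis hn).repr.inner_map_map, PiLp.inner_apply, map_sum]
  congr 1 with i
  rw [eigenvectorBasis_apply_self_apply, ← smul_eq_mul, inner_smul_left, conj_ofReal,
    inner_self_eq_norm_sq_to_K, ← ofReal_pow, ← ofReal_mul, ofReal_re]

lemma norm_sq_eq_sum_repr (hT : T.IsSymmetric) (hn : finrank 𝕜 E = n) (x : E) :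
    ‖x‖ ^ 2 = ∑ i, ‖(hT.eigenvectorBasis hn).repr x i‖ ^ 2 := by
  rw [← (hT.eigenvectorBasis hn).repr.norm_map, EuclideanSpace.norm_sq_eq]

lemma mul_norm_sq_le_re_inner_of_mem_span (hT : T.IsSymmetric) (hn : finrank 𝕜 E = n)
    {s : Finset (Fin n)} {c : ℝ} (hc : ∀ j ∈ s, c ≤ hT.eigenvalues hn j) {x : E}
    (hx : x ∈ Submodule.span 𝕜 (Set.range fun k : s ↦ hT.eigenvectorBasis hn k)) :
    c * ‖x‖ ^ 2 ≤ re (inner 𝕜 (T x) x) := by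
  rw [hT.re_inner_apply_self_eq_sum hn, hT.norm_sq_eq_sum_repr hn, Finset.mul_sum]
  refine Finset.sum_le_sum fun j _ ↦ ?_
  by_cases hj : j ∈ s
  · gcongr
    exact hc j hj
  · simp [OrthonormalBasis.repr_apply_eq_zero_of_mem_span _ _ hx hj]

lemma re_inner_le_mul_norm_sq_of_mem_span (hT : T.IsSymmetric) (hn : finrank 𝕜 E = n)
    {s : Finset (Fin n)} {c : ℝ} (hc : ∀ j ∈ s, hT.eigenvalues hn j ≤ c) {x : E}
    (hx : x ∈ Submodule.span 𝕜 (Set.range fun k : s ↦ hT.eigenvectorBasis hn k)) :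
    re (inner 𝕜 (T x) x) ≤ c * ‖x‖ ^ 2 := by
  rw [hT.re_inner_apply_self_eq_sum hn, hT.norm_sq_eq_sum_repr hn, Finset.mul_sum]
  refine Finset.sum_le_sum fun j _ ↦ ?_
  by_cases hj : j ∈ s
  · gcongr
    exact hc j hj
  · simp [OrthonormalBasis.repr_apply_eq_zero_of_mem_span _ _ hx hj]

/-- Weyl's monotonicity principle. -/
theorem eigenvalues_le_of_isPositive_sub (hT : T.IsSymmetric) (hS : S.IsSymmetric)
    (hn : finrank 𝕜 E = n) (hST : (S - T).IsPositive) (i : Fin n) :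
    hT.eigenvalues hn i ≤ hS.eigenvalues hn i := by
  -- eigenvectors of `T` with eigenvalues `≥ λᵢ(T)` and of `S` with eigenvalues `≤ λᵢ(S)`
  -- span subspaces of dimensions `i + 1` and `n - i`, which must meet
  set U := Submodule.span 𝕜 (Set.range fun k : Finset.Iic i ↦ hT.eigenvectorBasis hn k)
  set W := Submodule.span 𝕜 (Set.range fun k : Finset.Ici i ↦ hS.eigenvectorBasis hn k)
  have hUW : U ⊓ W ≠ ⊥ := by
    refine Submodule.inf_ne_bot_of_finrank_lt_add ?_
    rw [OrthonormalBasis.finrank_span_range_subtype, OrthonormalBasis.finrank_span_range_subtype,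
      Fin.card_Iic, Fin.card_Ici, hn]
    omega
  obtain ⟨x, hx, hx0⟩ := Submodule.exists_mem_ne_zero_of_ne_bot hUW
  have hTx := hT.mul_norm_sq_le_re_inner_of_mem_span hn
    (fun j hj ↦ hT.eigenvalues_antitone hn (Finset.mem_Iic.mp hj)) (Submodule.mem_inf.mp hx).1
  have hSx := hS.re_inner_le_mul_norm_sq_of_mem_span hn
    (fun j hj ↦ hS.eigenvalues_antitone hn (Finset.mem_Ici.mp hj)) (Submodule.mem_inf.mp hx).2
  have hTS : re (inner 𝕜 (T x) x) ≤ re (inner 𝕜 (S x) x) := by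
    simpa [inner_sub_left] using hST.2 x
  have : 0 < ‖x‖ ^ 2 := by positivity
  exact le_of_mul_le_mul_right (hTx.trans (hTS.trans hSx)) this

end LinearMap.IsSymmetric

end InnerProductSpace

namespace Matrix

variable {𝕜 n : Type*} [RCLike 𝕜] [Fintype n]

lemma PosSemidef.re_trace_mul_nonneg [DecidableEq n] {A B : Matrix n n 𝕜} (hA : A.PosSemidef)
    (hB : B.PosSemidef) : 0 ≤ re (A * B).trace := by
  set S := CFC.sqrt A
  have hS : Sᴴ = S := (nonneg_iff_posSemidef.mp (CFC.sqrt_nonneg A)).1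
  have hSS : S * S = A := CFC.sqrt_mul_sqrt_self A hA.nonneg
  have : (A * B).trace = (Sᴴ * B * S).trace := by
    rw [hS, ← hSS, mul_assoc, trace_mul_comm, mul_assoc]
  rw [this]
  exact (RCLike.nonneg_iff.mp (hB.conjTranspose_mul_mul_same S).trace_nonneg).1

namespace IsHermitian

variable [DecidableEq n] {A B : Matrix n n 𝕜}

lemma trace_cfc (hA : A.IsHermitian) (f : ℝ → ℝ) :
    (hA.cfc f).trace = ∑ i, (f (hA.eigenvalues i) : 𝕜) := by
  rw [IsHermitian.cfc, Unitary.conjStarAlgAut_apply, trace_mul_cycle, Unitary.coe_star_mul_self,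
    one_mul, trace_diagonal]
  rfl

lemma posSemidef_cfc (hA : A.IsHermitian) {f : ℝ → ℝ} (hf : ∀ x, 0 ≤ f x) :
    (hA.cfc f).PosSemidef := by
  rw [← hA.cfc_eq, ← nonneg_iff_posSemidef]
  exact cfc_nonneg fun x _ ↦ hf x

lemma sum_comp_eigenvalues₀ {M : Type*} [AddCommMonoid M] (hA : A.IsHermitian) (g : ℝ → M) :
    ∑ i, g (hA.eigenvalues₀ i) = ∑ i, g (hA.eigenvalues i) :=
  (Equiv.sum_comp (Fintype.equivOfCardEq (Fintype.card_fin _)).symm _).symm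

lemma re_trace_eq_sum_eigenvalues₀ (hA : A.IsHermitian) : re A.trace = ∑ i, hA.eigenvalues₀ i := by
  rw [hA.sum_comp_eigenvalues₀ (fun x ↦ x), hA.trace_eq_sum_eigenvalues, map_sum]
  simp

-- `eigenvalues₀` is sorted decreasingly, whereas `eigenvalues` is an arbitrary reindexing of it.
lemma eigenvalues₀_le_eigenvalues₀ (hA : A.IsHermitian) (hB : B.IsHermitian)
    (hAB : (B - A).PosSemidef) (i : Fin (Fintype.card n)) :
    hA.eigenvalues₀ i ≤ hB.eigenvalues₀ i :=
  LinearMap.IsSymmetric.eigenvalues_le_of_isPositive_sub _ _ _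
    (by rwa [← map_sub, isPositive_toEuclideanLin_iff]) i

end IsHermitian

lemma PosSemidef.eigenvalues₀_mem_Icc [DecidableEq n] {A : Matrix n n 𝕜} (hA : A.PosSemidef)
    (hA1 : re A.trace ≤ 1) (i : Fin (Fintype.card n)) : hA.1.eigenvalues₀ i ∈ Set.Icc 0 1 := by
  have hnonneg (j) : 0 ≤ hA.1.eigenvalues₀ j := by
    simpa [IsHermitian.eigenvalues] using
      hA.eigenvalues_nonneg (Fintype.equivOfCardEq (Fintype.card_fin _) j)
  refine ⟨hnonneg i, le_trans ?_ hA1⟩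
  rw [hA.1.re_trace_eq_sum_eigenvalues₀]
  exact Finset.single_le_sum (fun j _ ↦ hnonneg j) (Finset.mem_univ i)

end Matrix

section Kraus

variable {𝕜 ι m n : Type*} [RCLike 𝕜] [Fintype ι] [Fintype n]

def krausMap (K : ι → Matrix m n 𝕜) (X : Matrix n n 𝕜) : Matrix m m 𝕜 :=
  ∑ i, K i * X * (K i)ᴴ

lemma krausMap_sub (K : ι → Matrix m n 𝕜) (X Y : Matrix n n 𝕜) :
    krausMap K (X - Y) = krausMap K X - krausMap K Y := by
  simp only [krausMap, Matrix.mul_sub, Matrix.sub_mul, Finset.sum_sub_distrib]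

lemma Matrix.PosSemidef.krausMap [Fintype m] (K : ι → Matrix m n 𝕜) {X : Matrix n n 𝕜}
    (hX : X.PosSemidef) :
    (krausMap K X).PosSemidef :=
  posSemidef_sum _ fun i _ ↦ hX.mul_mul_conjTranspose_same (K i)

lemma re_trace_krausMap_le [Fintype m] [DecidableEq n] {K : ι → Matrix m n 𝕜}
    (hK : (1 - ∑ i, (K i)ᴴ * K i).PosSemidef) {X : Matrix n n 𝕜} (hX : X.PosSemidef) :
    re (krausMap K X).trace ≤ re X.trace := by
  have htrace : (krausMap K X).trace = ((∑ i, (K i)ᴴ * K i) * X).trace := by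
    simp only [krausMap, trace_sum, Finset.sum_mul, trace_mul_cycle (K _)]
  have := hK.re_trace_mul_nonneg hX
  rw [sub_mul, one_mul, trace_sub, map_sub] at this
  rw [htrace]
  linarith

end Kraus

section TraceNorm

variable {N : ℕ}

lemma traceNorm_eq_sum_abs_eigenvalues {A : Matrix (Fin N) (Fin N) ℂ} (hA : A.IsHermitian) :
    traceNorm A = ∑ i, |hA.eigenvalues i| := by
  have hAA := (posSemidef_conjTranspose_mul_self A).1
  have hsq : Aᴴ * A = cfc (· ^ 2 : ℝ → ℝ) A := by rw [cfc_pow_id A 2 hA.isSelfAdjoint, hA.eq, sq]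
  have : traceNorm A = re (hAA.cfc Real.sqrt).trace := by
    rw [traceNorm, IsHermitian.cfc, Unitary.conjStarAlgAut_apply]
    rfl
  rw [this, ← hAA.cfc_eq, hsq, ← cfc_comp Real.sqrt (· ^ 2) A]
  simp only [Function.comp_def, Real.sqrt_sq_eq_abs]
  rw [hA.cfc_eq, hA.trace_cfc, map_sum]
  simp

lemma Matrix.IsHermitian.exists_posSemidef_eq_sub_and_traceNorm_eq
    {A : Matrix (Fin N) (Fin N) ℂ} (hA : A.IsHermitian) :
    ∃ P Q : Matrix (Fin N) (Fin N) ℂ, P.PosSemidef ∧ Q.PosSemidef ∧ A = P - Q ∧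
      traceNorm A = re P.trace + re Q.trace := by
  refine ⟨hA.cfc (max · 0), hA.cfc (max (-·) 0), hA.posSemidef_cfc fun _ ↦ le_max_right _ _,
    hA.posSemidef_cfc fun _ ↦ le_max_right _ _, ?_, ?_⟩
  · rw [← hA.cfc_eq, ← hA.cfc_eq, ← cfc_sub (max · 0) (max (-·) 0) A]
    conv_lhs => rw [← cfc_id' ℝ A]
    refine congrArg (cfc · A) (funext fun x ↦ ?_)
    rcases le_total x 0 with h | h <;> simp [h]
  · rw [traceNorm_eq_sum_abs_eigenvalues hA, hA.trace_cfc, hA.trace_cfc, ← map_add,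
      ← Finset.sum_add_distrib, map_sum]
    refine Finset.sum_congr rfl fun i _ ↦ ?_
    rcases le_total (hA.eigenvalues i) 0 with h | h <;> simp [h]

lemma traceNorm_le_of_eq_sub {A P Q : Matrix (Fin N) (Fin N) ℂ} (hA : A.IsHermitian)
    (hP : P.PosSemidef) (hQ : Q.PosSemidef) (hPQ : A = P - Q) :
    traceNorm A ≤ re P.trace + re Q.trace := by
  subst hPQ
  set U : Matrix (Fin N) (Fin N) ℂ := (hA.eigenvectorUnitary : Matrix (Fin N) (Fin N) ℂ)
  -- in an eigenbasis of `A`, each eigenvalue is a difference of diagonal entries of `P` and `Q`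
  have hdiag (i) : hA.eigenvalues i = re ((Uᴴ * P * U) i i) - re ((Uᴴ * Q * U) i i) := by
    have := congrFun (congrFun hA.conjStarAlgAut_star_eigenvectorUnitary i) i
    rw [Unitary.conjStarAlgAut_star_apply, mul_sub, sub_mul] at this
    simpa [star_eq_conjTranspose] using congrArg re this.symm
  have hdiag_nonneg {R : Matrix (Fin N) (Fin N) ℂ} (hR : R.PosSemidef) (i) :
      0 ≤ re ((Uᴴ * R * U) i i) :=
    (RCLike.nonneg_iff.mp (hR.conjTranspose_mul_mul_same U).diag_nonneg).1
  have hsum_diag (R : Matrix (Fin N) (Fin N) ℂ) : ∑ i, re ((Uᴴ * R * U) i i) = re R.trace := by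
    rw [← map_sum]
    change re (Uᴴ * R * U).trace = _
    rw [trace_mul_cycle, ← star_eq_conjTranspose,
      Unitary.mul_star_self_of_mem hA.eigenvectorUnitary.2, one_mul]
  rw [traceNorm_eq_sum_abs_eigenvalues hA, ← hsum_diag P, ← hsum_diag Q, ← Finset.sum_add_distrib]
  refine Finset.sum_le_sum fun i _ ↦ ?_
  rw [hdiag i, abs_le]
  constructor <;> linarith [hdiag_nonneg hP i, hdiag_nonneg hQ i]

lemma traceNorm_krausMap_sub_le {N' : ℕ} {ι : Type*} [Fintype ι]
    {K : ι → Matrix (Fin N') (Fin N) ℂ} (hK : (1 - ∑ i, (K i)ᴴ * K i).PosSemidef)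
    {X Y : Matrix (Fin N) (Fin N) ℂ} (hX : X.IsHermitian) (hY : Y.IsHermitian) :
    traceNorm (krausMap K X - krausMap K Y) ≤ traceNorm (X - Y) := by
  obtain ⟨P, Q, hP, hQ, hPQ, hnorm⟩ := (hX.sub hY).exists_posSemidef_eq_sub_and_traceNorm_eq
  rw [hnorm, ← krausMap_sub, hPQ, krausMap_sub]
  have hKP := hP.krausMap K
  have hKQ := hQ.krausMap K
  calc traceNorm (krausMap K P - krausMap K Q)
      ≤ re (krausMap K P).trace + re (krausMap K Q).trace :=
        traceNorm_le_of_eq_sub (hKP.1.sub hKQ.1) hKP hKQ rfl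
    _ ≤ re P.trace + re Q.trace :=
        add_le_add (re_trace_krausMap_le hK hP) (re_trace_krausMap_le hK hQ)

lemma sum_abs_eigenvalues₀_sub_le {A B : Matrix (Fin N) (Fin N) ℂ} (hA : A.IsHermitian)
    (hB : B.IsHermitian) :
    ∑ i, |hA.eigenvalues₀ i - hB.eigenvalues₀ i| ≤ traceNorm (A - B) := by
  obtain ⟨P, Q, hP, hQ, hPQ, hnorm⟩ := (hA.sub hB).exists_posSemidef_eq_sub_and_traceNorm_eq
  -- `A + Q = B + P` dominates both `A` and `B`, with trace excesses `tr Q` and `tr P`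
  have hV : (A + Q).IsHermitian := hA.add hQ.1
  have hVB : A + Q = B + P := by rw [sub_eq_sub_iff_add_eq_add.mp hPQ, add_comm]
  have hAV (i) := hA.eigenvalues₀_le_eigenvalues₀ hV (by rwa [add_sub_cancel_left]) i
  have hBV (i) := hB.eigenvalues₀_le_eigenvalues₀ hV (by rwa [hVB, add_sub_cancel_left]) i
  calc ∑ i, |hA.eigenvalues₀ i - hB.eigenvalues₀ i|
      ≤ ∑ i, (2 * hV.eigenvalues₀ i - hA.eigenvalues₀ i - hB.eigenvalues₀ i) :=
        Finset.sum_le_sum fun i _ ↦ abs_le.mpr ⟨by linarith [hBV i], by linarith [hAV i]⟩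
    _ = 2 * re (A + Q).trace - re A.trace - re B.trace := by
        rw [hV.re_trace_eq_sum_eigenvalues₀, hA.re_trace_eq_sum_eigenvalues₀,
          hB.re_trace_eq_sum_eigenvalues₀, Finset.mul_sum, ← Finset.sum_sub_distrib,
          ← Finset.sum_sub_distrib]
    _ = re P.trace + re Q.trace := by
        have h1 : re (A + Q).trace = re A.trace + re Q.trace := by rw [trace_add, map_add]
        have h2 : re (A + Q).trace = re B.trace + re P.trace := by rw [hVB, trace_add, map_add]
        linarith
    _ = traceNorm (A - B) := hnorm.symm

end TraceNorm

lemma vnEntropy_eq_sum_negMulLog {N : ℕ} {A : Matrix (Fin N) (Fin N) ℂ} (hA : A.IsHermitian) :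
    vnEntropy A = ∑ i, Real.negMulLog (hA.eigenvalues₀ i) := by
  rw [vnEntropy, dif_pos hA, hA.sum_comp_eigenvalues₀, ← Finset.sum_neg_distrib]
  simp [Real.negMulLog]

/-- Fannes' inequality for subnormalized states. -/
theorem abs_vnEntropy_sub_le {N : ℕ} {A B : Matrix (Fin N) (Fin N) ℂ} (hA : A.PosSemidef)
    (hB : B.PosSemidef) (hA1 : re A.trace ≤ 1) (hB1 : re B.trace ≤ 1) {κ : ℝ} (hκ : 0 < κ)
    (hκe : κ ≤ Real.exp (-1)) (hAB : traceNorm (A - B) ≤ κ) :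
    |vnEntropy A - vnEntropy B| ≤ κ * Real.log (N / κ) := by
  rw [vnEntropy_eq_sum_negMulLog hA.1, vnEntropy_eq_sum_negMulLog hB.1]
  simpa using Real.abs_sum_negMulLog_sub_le (hA.eigenvalues₀_mem_Icc hA1)
    (hB.eigenvalues₀_mem_Icc hB1) hκ hκe ((sum_abs_eigenvalues₀_sub_le hA.1 hB.1).trans hAB)

lemma abs_vnEntropy_krausMap_sub_le {N N' : ℕ} {ι : Type*} [Fintype ι]
    {K : ι → Matrix (Fin N') (Fin N) ℂ} (hK : (1 - ∑ i, (K i)ᴴ * K i).PosSemidef)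
    {X Y : Matrix (Fin N) (Fin N) ℂ} (hX : X.PosSemidef) (hY : Y.PosSemidef)
    (hX1 : re X.trace ≤ 1) (hY1 : re Y.trace ≤ 1) {κ : ℝ} (hκ : 0 < κ)
    (hκe : κ ≤ Real.exp (-1)) (hXY : traceNorm (X - Y) ≤ κ) :
    |vnEntropy (krausMap K X) - vnEntropy (krausMap K Y)| ≤ κ * Real.log (N' / κ) :=
  abs_vnEntropy_sub_le (hX.krausMap K) (hY.krausMap K) ((re_trace_krausMap_le hK hX).trans hX1)
    ((re_trace_krausMap_le hK hY).trans hY1) hκ hκe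
    ((traceNorm_krausMap_sub_le hK hX.1 hY.1).trans hXY)

theorem objective_continuity_in_state_general
    {d d' m p : ℕ}
    (K : Fin m → Matrix (Fin d') (Fin d) ℂ)
    (hK : ((1 : Matrix (Fin d) (Fin d) ℂ) - ∑ i, (K i)ᴴ * K i).PosSemidef)
    (G : Matrix (Fin d) (Fin d) ℂ → Matrix (Fin d') (Fin d') ℂ)
    (hG : G = fun X => ∑ i, K i * X * (K i)ᴴ)
    (P : Fin p → Matrix (Fin d') (Fin d') ℂ)
    (hP1 : ∀ j, (P j)ᴴ = P j) (hP2 : ∀ j, P j * P j = P j)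
    (hP4 : ∑ j, P j = 1)
    (Z : Matrix (Fin d') (Fin d') ℂ → Matrix (Fin d') (Fin d') ℂ)
    (hZ : Z = fun X => ∑ j, P j * X * P j)
    (f : Matrix (Fin d) (Fin d) ℂ → ℝ)
    (hf : f = fun X => vnEntropy (Z (G X)) - vnEntropy (G X))
    (ρ σ : Matrix (Fin d) (Fin d) ℂ)
    (hρ : ρ.PosSemidef) (hρ1 : ρ.trace = 1)
    (hσ : σ.PosSemidef) (hσ1 : σ.trace = 1)
    (κ : ℝ) (hκ0 : 0 < κ) (hκe : κ ≤ 1 / Real.exp 1)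
    (hdist : traceNorm (ρ - σ) ≤ κ) :
    |f ρ - f σ| ≤ 2 * κ * Real.log (d' / κ) := by
  subst hG hZ hf
  have hκe' : κ ≤ Real.exp (-1) := by rwa [Real.exp_neg, ← one_div]
  have hG (X : Matrix (Fin d) (Fin d) ℂ) : ∑ i, K i * X * (K i)ᴴ = krausMap K X := rfl
  have hZ (X : Matrix (Fin d') (Fin d') ℂ) : ∑ j, P j * X * P j = krausMap P X := by
    simp only [krausMap, hP1]
  have hPK : (1 - ∑ j, (P j)ᴴ * P j).PosSemidef := by
    simp only [hP1, hP2, hP4, sub_self]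
    exact .zero
  have hρ1' : re ρ.trace ≤ 1 := by simp [hρ1]
  have hσ1' : re σ.trace ≤ 1 := by simp [hσ1]
  have hGρσ := abs_vnEntropy_krausMap_sub_le hK hρ hσ hρ1' hσ1' hκ0 hκe' hdist
  have hZGρσ := abs_vnEntropy_krausMap_sub_le hPK (hρ.krausMap K) (hσ.krausMap K)
    ((re_trace_krausMap_le hK hρ).trans hρ1') ((re_trace_krausMap_le hK hσ).trans hσ1') hκ0 hκe'
    ((traceNorm_krausMap_sub_le hK hρ.1 hσ.1).trans hdist)
  simp only [hG, hZ]
  rw [sub_sub_sub_comm]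
  refine (abs_sub _ _).trans ?_
  linarith

/-- Continuity of the objective function `f(ρ) = H(Z(G(ρ))) − H(G(ρ))`
where `G` is CPTNI and `Z` is a pinching channel: if `ρ, σ` are density matrices
with `‖ρ − σ‖₁ ≤ κ ≤ 1/e`, then `|f(ρ) − f(σ)| ≤ 2 κ log(d'/κ)`. -/
theorem objective_continuity_in_state
    {d d' m p : ℕ}
    (K : Fin m → Matrix (Fin d') (Fin d) ℂ)
    (hK : ((1 : Matrix (Fin d) (Fin d) ℂ) - ∑ i, (K i)ᴴ * K i).PosSemidef)
    (G : Matrix (Fin d) (Fin d) ℂ → Matrix (Fin d') (Fin d') ℂ)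
    (hG : G = fun X => ∑ i, K i * X * (K i)ᴴ)
    (P : Fin p → Matrix (Fin d') (Fin d') ℂ)
    (hP1 : ∀ j, (P j)ᴴ = P j) (hP2 : ∀ j, P j * P j = P j)
    (hP3 : ∀ j k, j ≠ k → P j * P k = 0)
    (hP4 : ∑ j, P j = 1)
    (Z : Matrix (Fin d') (Fin d') ℂ → Matrix (Fin d') (Fin d') ℂ)
    (hZ : Z = fun X => ∑ j, P j * X * P j)
    (f : Matrix (Fin d) (Fin d) ℂ → ℝ)
    (hf : f = fun X => vnEntropy (Z (G X)) - vnEntropy (G X))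
    (ρ σ : Matrix (Fin d) (Fin d) ℂ)
    (hρ : ρ.PosSemidef) (hρ1 : ρ.trace = 1)
    (hσ : σ.PosSemidef) (hσ1 : σ.trace = 1)
    (κ : ℝ) (hκ0 : 0 < κ) (hκe : κ ≤ 1 / Real.exp 1)
    (hdist : traceNorm (ρ - σ) ≤ κ) :
    |f ρ - f σ| ≤ 2 * κ * Real.log (d' / κ) :=
  objective_continuity_in_state_general K hK G hG P hP1 hP2 hP4 Z hZ f hf ρ σ hρ hρ1 hσ hσ1 κ hκ0
    hκe hdist
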